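/- Let f_x, f̄_x, f_z, f̄_z, g_x, ḡ_x, g_z, ḡ_z be monomials in a polynomial ring over ℚ such that every monomial with an x subscript is coprime to every monomial with a z subscript. Then the binomial S-polynomial satisfies S(f_x·f_z + f̄_x·f̄_z, g_x·g_z + ḡ_x·ḡ_z) = S(f_x + f̄_x, g_x + ḡ_x)₁ · S(f_z + f̄_z, g_z + ḡ_z)₁ − S(f_x + f̄_x, g_x + ḡ_x)₂ · S(f_z + f̄_z, g_z + ḡ_z)₂, where subscripts 1 and 2 denote the first and second terms of the S-polynomial formula; consequently this S-polynomial reduces to zero via the pair S(f_x + f̄_x, g_x + ḡ_x) and S(f_z + f̄_z, g_z + ḡ_z). -/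

import Mathlib

open MvPolynomial
open scoped MonomialOrder

/-- The leading exponent (leading monomial) of a multivariate polynomial with
respect to a monomial order. -/
noncomputable def leadExp {σ : Type*} (m : MonomialOrder σ)
    (f : MvPolynomial σ ℚ) : σ →₀ ℕ :=
  m.toSyn.symm (f.support.sup fun d => m.toSyn d)

/-- The monomial with exponent `a` and coefficient `1` in `ℚ[x']`. -/
noncomputable def mono {σ : Type*} (a : σ →₀ ℕ) : MvPolynomial σ ℚ :=
  monomial a 1

/-- The S-polynomial of the binomials `p₁ + p₂` and `q₁ + q₂` (monomials with their
leading terms written first):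
`S(p₁+p₂, q₁+q₂) = (q₁/gcd(p₁,q₁))·p₂ − (p₁/gcd(p₁,q₁))·q₂`. -/
noncomputable def sBin {σ : Type*} (p₁ p₂ q₁ q₂ : σ →₀ ℕ) : MvPolynomial σ ℚ :=
  mono (q₁ - p₁ ⊓ q₁ + p₂) - mono (p₁ - p₁ ⊓ q₁ + q₂)

/-!
Coprimality of the `x`- and `z`-exponents makes `gcd` split across the two factors, so the
S-polynomial of the products is the binomial `X^(a+b) - X^(a'+b')` built from the terms
`X^a - X^a'` and `X^b - X^b'` of the two factor S-polynomials. The identity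
`X^(a+b) - X^(a'+b') = X^b (X^a - X^a') + X^a' (X^b - X^b')`, or its mirror image with the
roles of `a` and `a'` exchanged, is a standard representation: choosing the variant whose
middle monomial `X^(a'+b)` (resp. `X^(a+b')`) is dominated keeps both summands below the
leading monomial.
-/

section

variable {σ : Type*}

theorem leadExp_eq_degree (m : MonomialOrder σ) (f : MvPolynomial σ ℚ) :
    leadExp m f = m.degree f :=
  rfl

theorem mono_mul (a b : σ →₀ ℕ) : (mono a * mono b : MvPolynomial σ ℚ) = mono (a + b) := by
  simp only [mono, monomial_mul, mul_one]

theorem degree_mono (m : MonomialOrder σ) (a : σ →₀ ℕ) :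
    m.degree (mono a : MvPolynomial σ ℚ) = a := by
  classical
  simp only [mono, MonomialOrder.degree_monomial, one_ne_zero, if_false]

theorem degree_mono_sub_mono_le (m : MonomialOrder σ) {a b c : σ →₀ ℕ}
    (ha : a ≼[m] c) (hb : b ≼[m] c) :
    m.degree (mono a - mono b : MvPolynomial σ ℚ) ≼[m] c :=
  m.degree_sub_le.trans (by simpa only [degree_mono] using sup_le ha hb)

theorem toSyn_degree_mono_sub_mono (m : MonomialOrder σ) {a b : σ →₀ ℕ} (hab : a ≠ b) :
    m.toSyn (m.degree (mono a - mono b : MvPolynomial σ ℚ)) = m.toSyn a ⊔ m.toSyn b := by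
  rcases lt_or_gt_of_ne (m.toSyn.injective.ne hab) with h | h
  · rw [← neg_sub, m.degree_neg, m.degree_sub_of_lt (by simpa only [degree_mono] using h),
      degree_mono, sup_eq_right.2 h.le]
  · rw [m.degree_sub_of_lt (by simpa only [degree_mono] using h), degree_mono,
      sup_eq_left.2 h.le]

theorem sBin_add_of_inf_eq_zero {p₁ p₂ q₁ q₂ p₁' p₂' q₁' q₂' : σ →₀ ℕ}
    (h : p₁ ⊓ q₁' = 0) (h' : p₁' ⊓ q₁ = 0) :
    sBin (p₁ + p₁') (p₂ + p₂') (q₁ + q₁') (q₂ + q₂') =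
      mono (q₁ - p₁ ⊓ q₁ + p₂) * mono (q₁' - p₁' ⊓ q₁' + p₂') -
        mono (p₁ - p₁ ⊓ q₁ + q₂) * mono (p₁' - p₁' ⊓ q₁' + q₂') := by
  rw [sBin, mono_mul, mono_mul]
  congr 2 <;> ext i <;>
  · have hi := DFunLike.congr_fun h i
    have hi' := DFunLike.congr_fun h' i
    simp only [Finsupp.add_apply, Finsupp.tsub_apply, Finsupp.inf_apply,
      Finsupp.coe_zero, Pi.zero_apply] at hi hi' ⊢
    omega

theorem exists_standard_repr_of_le (m : MonomialOrder σ) {a a' : σ →₀ ℕ} (b b' : σ →₀ ℕ)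
    (h : a' ≼[m] a) :
    ∃ q₁ q₂ : MvPolynomial σ ℚ,
      mono (a + b) - mono (a' + b') = q₁ * (mono a - mono a') + q₂ * (mono b - mono b') ∧
      m.degree (q₁ * (mono a - mono a')) ≼[m] m.degree (mono (a + b) - mono (a' + b')) ∧
      m.degree (q₂ * (mono b - mono b')) ≼[m] m.degree (mono (a + b) - mono (a' + b')) := by
  by_cases hne : a + b = a' + b'
  · exact ⟨0, 0, by simp [hne], by simp [hne], by simp [hne]⟩
  have hdeg := toSyn_degree_mono_sub_mono m hne
  have hab : a + b ≼[m] m.degree (mono (a + b) - mono (a' + b')) := hdeg ▸ le_sup_left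
  have hab' : a' + b' ≼[m] m.degree (mono (a + b) - mono (a' + b')) := hdeg ▸ le_sup_right
  have hmid : a' + b ≼[m] a + b := by
    simpa only [map_add] using add_le_add_left h (m.toSyn b)
  refine ⟨mono b, mono a', ?_, ?_, ?_⟩
  · simp only [mul_sub, mono_mul]
    rw [add_comm b a, add_comm b a']
    ring
  · rw [mul_sub, mono_mul, mono_mul, add_comm b a, add_comm b a']
    exact degree_mono_sub_mono_le m hab (hmid.trans hab)
  · rw [mul_sub, mono_mul, mono_mul]
    exact degree_mono_sub_mono_le m (hmid.trans hab) hab'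

theorem exists_standard_repr (m : MonomialOrder σ) (a a' b b' : σ →₀ ℕ) :
    ∃ q₁ q₂ : MvPolynomial σ ℚ,
      mono (a + b) - mono (a' + b') = q₁ * (mono a - mono a') + q₂ * (mono b - mono b') ∧
      m.degree (q₁ * (mono a - mono a')) ≼[m] m.degree (mono (a + b) - mono (a' + b')) ∧
      m.degree (q₂ * (mono b - mono b')) ≼[m] m.degree (mono (a + b) - mono (a' + b')) := by
  rcases le_total (m.toSyn a') (m.toSyn a) with h | h
  · exact exists_standard_repr_of_le m b b' h
  obtain ⟨q₁, q₂, hrepr, h₁, h₂⟩ := exists_standard_repr_of_le m b' b h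
  refine ⟨q₁, q₂, ?_, ?_, ?_⟩
  · linear_combination -hrepr
  · rwa [← neg_sub (mono a'), mul_neg, m.degree_neg, ← neg_sub (mono (a' + b')), m.degree_neg]
  · rwa [← neg_sub (mono b'), mul_neg, m.degree_neg, ← neg_sub (mono (a' + b')), m.degree_neg]

end

/-- Separating interior and closure variables:  if every monomial with an `x`
subscript is coprime to every monomial with a `z` subscript, then
`S(f_x·f_z + f̄_x·f̄_z, g_x·g_z + ḡ_x·ḡ_z)` equals the product of the first terms of
`S(f_x + f̄_x, g_x + ḡ_x)` and `S(f_z + f̄_z, g_z + ḡ_z)` minus the product of their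
second terms; consequently it reduces to zero via that pair of S-polynomials
(a standard representation with the leading-monomial bound exists). -/
theorem sBin_product_split {σ : Type*} (m : MonomialOrder σ)
    (fx fbx gx gbx fz fbz gz gbz : σ →₀ ℕ)
    (hcop : ∀ a ∈ ({fx, fbx, gx, gbx} : Set (σ →₀ ℕ)),
      ∀ b ∈ ({fz, fbz, gz, gbz} : Set (σ →₀ ℕ)), a ⊓ b = 0) :
    sBin (fx + fz) (fbx + fbz) (gx + gz) (gbx + gbz) =
        mono (gx - fx ⊓ gx + fbx) * mono (gz - fz ⊓ gz + fbz) -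
          mono (fx - fx ⊓ gx + gbx) * mono (fz - fz ⊓ gz + gbz) ∧
    ∃ q₁ q₂ : MvPolynomial σ ℚ,
      sBin (fx + fz) (fbx + fbz) (gx + gz) (gbx + gbz) =
          q₁ * sBin fx fbx gx gbx + q₂ * sBin fz fbz gz gbz ∧
      (leadExp m (q₁ * sBin fx fbx gx gbx) ≼[m]
        leadExp m (sBin (fx + fz) (fbx + fbz) (gx + gz) (gbx + gbz))) ∧
      (leadExp m (q₂ * sBin fz fbz gz gbz) ≼[m]
        leadExp m (sBin (fx + fz) (fbx + fbz) (gx + gz) (gbx + gbz))) := by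
  have hsplit := sBin_add_of_inf_eq_zero (p₂ := fbx) (p₂' := fbz) (q₂ := gbx) (q₂' := gbz)
    (hcop fx (by simp) gz (by simp)) (inf_comm gx fz ▸ hcop gx (by simp) fz (by simp))
  refine ⟨hsplit, ?_⟩
  rw [hsplit, mono_mul, mono_mul]
  simp only [sBin, leadExp_eq_degree]
  exact exists_standard_repr m _ _ _ _
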